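/- Define a sequence a : ℕ+ → ℤ by a(1) = a(2) = 1, a(2p+1) = a(p+1) - 1 and a(2p+2) = a(p+1) + 1 for all p ≥ 1. Then for all p ≥ 1, ∑_{i=1}^{p} a(i) = ∑_{j=p+1}^{2p} a(j). -/
import Mathlib


/-- For the partial perfect additive sequence (a 1 = a 2 = 1,
a(2p+1) = a(p+1) - 1, a(2p+2) = a(p+1) + 1), the sum of the first p terms
equals the sum of the next p terms. -/
theorem partial_perfect_additive (a : ℕ → ℤ) (h1 : a 1 = 1) (h2 : a 2 = 1)
    (hodd : ∀ p : ℕ, 1 ≤ p → a (2 * p + 1) = a (p + 1) - 1)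
    (heven : ∀ p : ℕ, 1 ≤ p → a (2 * p + 2) = a (p + 1) + 1) :
    ∀ p : ℕ, 1 ≤ p →
      ∑ i ∈ Finset.Icc 1 p, a i = ∑ j ∈ Finset.Icc (p + 1) (2 * p), a j := by
  have key : ∀ p : ℕ, 1 ≤ p →
      ∑ i ∈ Finset.Icc 1 (2 * p), a i = 2 * ∑ i ∈ Finset.Icc 1 p, a i := by
    intro p hp
    induction p, hp using Nat.le_induction with
    | base =>
      norm_num [Finset.sum_Icc_succ_top, h1, h2]
    | succ n hn ih =>
      have h2n : 2 * (n + 1) = (2 * n + 1) + 1 := by ring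
      rw [h2n, Finset.sum_Icc_succ_top (by omega), Finset.sum_Icc_succ_top (by omega),
        Finset.sum_Icc_succ_top (by omega : 1 ≤ n + 1), ih]
      have ho := hodd n hn
      have he := heven n hn
      have : 2 * n + 1 + 1 = 2 * n + 2 := by ring
      rw [this, ho, he]
      ring
  intro p hp
  have hsplit : ∑ i ∈ Finset.Icc 1 p, a i + ∑ j ∈ Finset.Icc (p + 1) (2 * p), a j
      = ∑ i ∈ Finset.Icc 1 (2 * p), a i := by
    have h1' : Finset.Icc 1 p = Finset.Ioc 0 p := rfl
    have h2' : Finset.Icc (p + 1) (2 * p) = Finset.Ioc p (2 * p) :=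
      Finset.Icc_add_one_left_eq_Ioc p (2 * p)
    rw [h1', h2', show Finset.Icc 1 (2*p) = Finset.Ioc 0 (2*p) from rfl]
    exact Finset.sum_Ioc_consecutive _ (Nat.zero_le p) (by omega)
  have := key p hp
  omega
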